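/- Let (Θ, Ω, f : Θ → Z) be a cardinal implementation problem such that f is surjective and Θ^una ∩ Θ^strict ⊆ Θ ⊆ Θ^strict. If f is UD-implemented by a stochastic finite-action mechanism M = ⟨S, g⟩, then for every z ∈ Z the product set ×_{i∈I} S_i^z is nonempty and g[×_{i∈I} S_i^z] = {z}, i.e., g(s) is the degenerate lottery on z for every s ∈ ×_{i∈I} S_i^z. -/
import Mathlib


open Function

noncomputable section

/-- A lottery (probability distribution) on the finite outcome set `Z`. -/
def Lottery (Z : Type) [Fintype Z] : Type :=
  {y : Z → ℝ // (∀ z, 0 ≤ y z) ∧ ∑ z, y z = 1}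

variable {Z : Type} [Fintype Z]

/-- The degenerate lottery on the outcome `z`. -/
def Lottery.delta [DecidableEq Z] (z : Z) : Lottery Z :=
  ⟨fun z' => if z' = z then 1 else 0, fun z' => by positivity, by simp⟩

/-- Expected utility of the lottery `y` under the vN-M utility function `u`. -/
def expUtil (u : Z → ℝ) (y : Lottery Z) : ℝ := ∑ z, y.1 z * u z

variable {I : Type} [DecidableEq I] {S : I → Type}

/-- `s_i` is strictly dominated (for agent `i`, at cardinal state `u`, in the mechanism
with outcome function `g`) on the product set `×_j T j`. -/
def Dominated (u : I → Z → ℝ) (g : (∀ i, S i) → Lottery Z)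
    (T : ∀ j, Set (S j)) (i : I) (si : S i) : Prop :=
  ∃ si' : S i, ∀ s : ∀ j, S j, (∀ j, j ≠ i → s j ∈ T j) →
    expUtil (u i) (g (update s i si)) < expUtil (u i) (g (update s i si'))

/-- `UDk u g k i` is the set of strategies of agent `i` surviving `k` rounds of iterative
deletion of strictly dominated strategies at the cardinal state `u` (`UDk u g 0 i = S i`). -/
def UDk (u : I → Z → ℝ) (g : (∀ i, S i) → Lottery Z) : ℕ → ∀ i, Set (S i)
  | 0 => fun _ => Set.univ
  | (k + 1) => fun i => {si ∈ UDk u g k i | ¬ Dominated u g (UDk u g k) i si}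

/-- `UD(M,u)`: profiles surviving one round of deletion. -/
def UDoneSet (u : I → Z → ℝ) (g : (∀ i, S i) → Lottery Z) : Set (∀ i, S i) :=
  {s | ∀ i, s i ∈ UDk u g 1 i}

/-- `UD^∞(M,u)`: profiles surviving iterative deletion (all rounds `k ≥ 1`). -/
def UDinfSet (u : I → Z → ℝ) (g : (∀ i, S i) → Lottery Z) : Set (∀ i, S i) :=
  {s | ∀ i, ∀ k : ℕ, s i ∈ UDk u g (k + 1) i}

/-- `S_i^z`: strategies of agent `i` from which the degenerate outcome `z` is reachable. -/
def Sz [DecidableEq Z] (g : (∀ i, S i) → Lottery Z) (i : I) (z : Z) : Set (S i) :=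
  {si | ∃ s : ∀ j, S j, s i = si ∧ g s = Lottery.delta z}

/-- `×_j T j` satisfies the non-domination property at `u`. -/
def NonDomProp (u : I → Z → ℝ) (g : (∀ i, S i) → Lottery Z) (T : ∀ j, Set (S j)) : Prop :=
  ∀ i, ∀ si ∈ T i, ∀ si' : S i, ∃ s : ∀ j, S j, (∀ j, j ≠ i → s j ∈ T j) ∧
    expUtil (u i) (g (update s i si')) ≤ expUtil (u i) (g (update s i si))

/-- `u` is a cardinal representation of the ordinal state `θ`. -/
def Represents (u : I → Z → ℝ) (θ : I → Z → Z → Prop) : Prop :=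
  ∀ i z z', θ i z z' ↔ u i z' ≤ u i z

/-- `Θ*`: all ordinal states (complete and transitive preference profiles). -/
def ThetaStar (I Z : Type) : Set (I → Z → Z → Prop) :=
  {θ | ∀ i, (∀ z z', θ i z z' ∨ θ i z' z) ∧ Transitive (θ i)}

/-- `Θ^una`: ordinal states where all agents have identical preferences. -/
def ThetaUna (I Z : Type) : Set (I → Z → Z → Prop) :=
  {θ ∈ ThetaStar I Z | ∀ i j z z', θ i z z' ↔ θ j z z'}

/-- `Θ^strict`: ordinal states where no agent has non-trivial indifference. -/
def ThetaStrict (I Z : Type) : Set (I → Z → Z → Prop) :=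
  {θ ∈ ThetaStar I Z | ∀ i z z', θ i z z' → θ i z' z → z = z'}

/-- The strict part `≻_i^θ`. -/
def StrictPref (θ : I → Z → Z → Prop) (i : I) (z z' : Z) : Prop := θ i z z' ∧ ¬ θ i z' z

/-- Agent `i` is a dictator for `f` on `Θ`. -/
def Dictator (Θ : Set (I → Z → Z → Prop)) (f : (I → Z → Z → Prop) → Z) (i : I) : Prop :=
  ∀ θ ∈ Θ, ∀ z, z ≠ f θ → StrictPref θ i (f θ) z

/-- `(Θ, Ω)` form a cardinal implementation problem: `Θ` is a set of ordinal states, every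
member of `Ω` is a cardinal representation of some `θ ∈ Θ`, and `Ω_θ ≠ ∅` for all `θ ∈ Θ`. -/
def CIProblem (Θ : Set (I → Z → Z → Prop)) (Ω : Set (I → Z → ℝ)) : Prop :=
  Θ ⊆ ThetaStar I Z ∧ (∀ u ∈ Ω, ∃ θ ∈ Θ, Represents u θ) ∧
    ∀ θ ∈ Θ, ∃ u ∈ Ω, Represents u θ

/-- `f` is UD-implemented by the mechanism with outcome function `g`. -/
def UDImplements [DecidableEq Z] (Θ : Set (I → Z → Z → Prop)) (Ω : Set (I → Z → ℝ))
    (f : (I → Z → Z → Prop) → Z) (g : (∀ i, S i) → Lottery Z) : Prop :=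
  ∀ θ ∈ Θ, ∀ u ∈ Ω, Represents u θ → g '' UDoneSet u g = {Lottery.delta (f θ)}

/-- `f` is UD^∞-implemented by the mechanism with outcome function `g`. -/
def UDinfImplements [DecidableEq Z] (Θ : Set (I → Z → Z → Prop)) (Ω : Set (I → Z → ℝ))
    (f : (I → Z → Z → Prop) → Z) (g : (∀ i, S i) → Lottery Z) : Prop :=
  ∀ θ ∈ Θ, ∀ u ∈ Ω, Represents u θ → g '' UDinfSet u g = {Lottery.delta (f θ)}

/-- `Θ^{(i1,i2)-z}`: strict states where `z` is second-best for both `i1` and `i2`,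
whose top-ranked outcomes differ. -/
def ThetaSecond [Fintype Z] (i1 i2 : I) (z : Z) : Set (I → Z → Z → Prop) :=
  {θ ∈ ThetaStrict I Z |
    Set.ncard {z' | θ i1 z z'} = Fintype.card Z - 1 ∧
    Set.ncard {z' | θ i2 z z'} = Fintype.card Z - 1 ∧
    {z' | θ i1 z z'} ≠ {z' | θ i2 z z'}}

end

lemma Lottery.delta_inj {Z : Type} [Fintype Z] [DecidableEq Z] {z z' : Z}
    (h : Lottery.delta z = Lottery.delta z') : z = z' := by
  by_contra hne
  have h2 := congrArg (fun y : Lottery Z => y.1 z) h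
  simp [Lottery.delta, hne] at h2

lemma expUtil_delta {Z : Type} [Fintype Z] [DecidableEq Z] (u : Z → ℝ) (z : Z) :
    expUtil u (Lottery.delta z) = u z := by
  simp [expUtil, Lottery.delta, ite_mul]

lemma expUtil_le_top {Z : Type} [Fintype Z] {u : Z → ℝ} {z : Z}
    (hu : ∀ z', u z' ≤ u z) (y : Lottery Z) : expUtil u y ≤ u z := by
  have h1 : expUtil u y ≤ ∑ z', y.1 z' * u z :=
    Finset.sum_le_sum fun z' _ => mul_le_mul_of_nonneg_left (hu z') (y.2.1 z')
  have h2 : ∑ z', y.1 z' * u z = u z := by rw [← Finset.sum_mul, y.2.2, one_mul]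
  linarith


/-- **Lemma 1 (Xiong).** If `f` is UD-implemented by a stochastic finite-action mechanism
`⟨S, g⟩`, then for every outcome `z`, the product set `×_i S_i^z` is nonempty and
`g[×_i S_i^z] = {z}`. -/
theorem image_of_Sz_product_UD
    {I Z : Type} [Fintype I] [Fintype Z] [DecidableEq I] [DecidableEq Z]
    (hI : 2 ≤ Fintype.card I) (hZ : 2 ≤ Fintype.card Z)
    (Θ : Set (I → Z → Z → Prop)) (Ω : Set (I → Z → ℝ)) (f : (I → Z → Z → Prop) → Z)
    (hCIP : CIProblem Θ Ω)
    (hsurj : ∀ z : Z, ∃ θ ∈ Θ, f θ = z)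
    (hsub1 : ThetaUna I Z ∩ ThetaStrict I Z ⊆ Θ) (hsub2 : Θ ⊆ ThetaStrict I Z)
    (S : I → Type) (hfin : ∀ i, Finite (S i)) (hne : ∀ i, Nonempty (S i))
    (g : (∀ i, S i) → Lottery Z) (himp : UDImplements Θ Ω f g) :
    ∀ z : Z, {s : ∀ i, S i | ∀ i, s i ∈ Sz g i z}.Nonempty ∧
      ∀ s ∈ {s : ∀ i, S i | ∀ i, s i ∈ Sz g i z}, g s = Lottery.delta z := by
  intro z
  classical
  set e := Fintype.equivFin Z with he
  set rank : Z → ℕ := fun a => if a = z then 0 else (e a).val + 1 with hrank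
  have hrinj : Function.Injective rank := by
    intro a b hab
    by_cases ha : a = z <;> by_cases hb : b = z
    · exact ha.trans hb.symm
    · simp [hrank, ha, hb] at hab
    · simp [hrank, ha, hb] at hab
    · simp only [hrank, ha, hb, if_neg, not_false_iff] at hab
      exact e.injective (Fin.ext (by omega))
  set θ : I → Z → Z → Prop := fun _ a b => rank a ≤ rank b with hθ
  have hθstar : θ ∈ ThetaStar I Z :=
    fun i => ⟨fun a b => le_total _ _, fun a b c h1 h2 => le_trans h1 h2⟩
  have hθstrict : θ ∈ ThetaStrict I Z :=
    ⟨hθstar, fun i a b h1 h2 => hrinj (le_antisymm h1 h2)⟩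
  have hθuna : θ ∈ ThetaUna I Z := ⟨hθstar, fun i j a b => Iff.rfl⟩
  have hθΘ : θ ∈ Θ := hsub1 ⟨hθuna, hθstrict⟩
  have htop : ∀ (i : I) (a : Z), θ i z a := by
    intro i a; simp only [hθ, hrank, if_pos rfl]; exact Nat.zero_le _
  obtain ⟨u, huΩ, hrep⟩ := hCIP.2.2 θ hθΘ
  have hutop : ∀ i a, u i a ≤ u i z := fun i a => (hrep i z a).1 (htop i a)
  have himg := himp θ hθΘ u huΩ hrep
  -- key membership lemma
  have hmem : ∀ s : ∀ i, S i, (∀ i, s i ∈ Sz g i z) → s ∈ UDoneSet u g := by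
    intro s hs i
    refine ⟨Set.mem_univ _, ?_⟩
    rintro ⟨si', hdom⟩
    obtain ⟨t, hti, hgt⟩ := hs i
    have h1 := hdom t (fun j _ => Set.mem_univ _)
    have ht : Function.update t i (s i) = t := by rw [← hti]; exact Function.update_eq_self i t
    rw [ht, hgt, expUtil_delta] at h1
    have h2 : expUtil (u i) (g (Function.update t i si')) ≤ u i z :=
      expUtil_le_top (hutop i) _
    linarith
  -- nonemptiness from surjectivity
  obtain ⟨θ', hθ'Θ, hfθ'⟩ := hsurj z
  obtain ⟨u', hu'Ω, hrep'⟩ := hCIP.2.2 θ' hθ'Θ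
  have himg' := himp θ' hθ'Θ u' hu'Ω hrep'
  rw [hfθ'] at himg'
  have hdz : Lottery.delta z ∈ g '' UDoneSet u' g := by rw [himg']; exact rfl
  obtain ⟨sstar, hsmem, hgs⟩ := hdz
  have hsz : ∀ i, sstar i ∈ Sz g i z := fun i => ⟨sstar, rfl, hgs⟩
  have hfθz : f θ = z := by
    have h3 : g sstar ∈ ({Lottery.delta (f θ)} : Set (Lottery Z)) := by
      rw [← himg]; exact ⟨sstar, hmem sstar hsz, rfl⟩
    have h4 : g sstar = Lottery.delta (f θ) := h3
    exact (Lottery.delta_inj (hgs ▸ h4)).symm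
  refine ⟨⟨sstar, hsz⟩, ?_⟩
  intro s hs
  have h3 : g s ∈ ({Lottery.delta (f θ)} : Set (Lottery Z)) := by
    rw [← himg]; exact ⟨s, hmem s hs, rfl⟩
  rw [hfθz] at h3
  exact h3
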